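/- For every term M of ℓΛ∞^{4S} and every natural number m, there is a unique natural number n satisfying the defining equations of the size |M|_m of M at depth m. -/

import Mathlib

namespace LLInf

/-- Node labels of preterms of the linear infinitary λ-calculus ℓΛ∞. -/
inductive Shape where
  | var (x : ℕ)
  | app
  | labs (x : ℕ)
  | iabs (x : ℕ)
  | cabs (x : ℕ)
  | ibox
  | cbox
deriving DecidableEq

/-- Preterms: possibly infinite trees, encoded by their (partial) position function. -/
def T : Type := List ℕ → Option Shape

def mk0 (s : Shape) : T := fun p => if p = [] then some s else none

def mk1 (s : Shape) (M : T) : T := fun p =>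
  match p with
  | [] => some s
  | 0 :: q => M q
  | _ => none

def mk2 (M N : T) : T := fun p =>
  match p with
  | [] => some Shape.app
  | 0 :: q => M q
  | 1 :: q => N q
  | _ => none

def child (M : T) (i : ℕ) : T := fun p => M (i :: p)

def bindsX (x : ℕ) : Option Shape → Bool
  | some (Shape.labs y) => y == x
  | some (Shape.iabs y) => y == x
  | some (Shape.cabs y) => y == x
  | _ => false

/-- Capture-avoiding (shadowing-respecting) substitution on positional preterms. -/
def substF (x : ℕ) (N : T) : T → List ℕ → Option Shape
  | M, [] => if M [] = some (Shape.var x) then N [] else M []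
  | M, i :: q =>
      if M [] = some (Shape.var x) then N (i :: q)
      else if bindsX x (M []) then M (i :: q)
      else substF x N (child M i) q
termination_by M p => p.length

def subst (x : ℕ) (N M : T) : T := fun p => substF x N M p

def FreeAt (x : ℕ) : T → List ℕ → Prop
  | M, [] => M [] = some (Shape.var x)
  | M, i :: q => bindsX x (M []) = false ∧ FreeAt x (child M i) q
termination_by M p => p.length

/-- `x` occurs free in `M`. -/
def Free (x : ℕ) (M : T) : Prop := ∃ p, FreeAt x M p

def arity : Shape → ℕ
  | Shape.var _ => 0
  | Shape.app => 2
  | _ => 1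

/-- The position function is a coherent (constructor-generated) tree. -/
def IsPre (M : T) : Prop :=
  (∃ s, M [] = some s) ∧
  (∀ p t, M p = some t → ∀ i, (∃ s, M (p ++ [i]) = some s) ↔ i < arity t) ∧
  (∀ p q, M p = none → M (p ++ q) = none)

/-- Basic reduction of ℓΛ∞. -/
inductive Basic : T → T → Prop
  | lin (x : ℕ) (M N : T) :
      Basic (mk2 (mk1 (Shape.labs x) M) N) (subst x N M)
  | ind (x : ℕ) (M N : T) :
      Basic (mk2 (mk1 (Shape.iabs x) M) (mk1 Shape.ibox N)) (subst x N M)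
  | coi (x : ℕ) (M N : T) :
      Basic (mk2 (mk1 (Shape.cabs x) M) (mk1 Shape.cbox N)) (subst x N M)

/-- One-step reduction, indexed by the level: the list of boxes crossed,
`false` for an inductive box, `true` for a coinductive box. -/
inductive Red : List Bool → T → T → Prop
  | base {M N} : Basic M N → Red [] M N
  | appL {s M N} (P) : Red s M N → Red s (mk2 M P) (mk2 N P)
  | appR {s M N} (P) : Red s M N → Red s (mk2 P M) (mk2 P N)
  | labs {s M N} (x) : Red s M N → Red s (mk1 (Shape.labs x) M) (mk1 (Shape.labs x) N)
  | iabs {s M N} (x) : Red s M N → Red s (mk1 (Shape.iabs x) M) (mk1 (Shape.iabs x) N)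
  | cabs {s M N} (x) : Red s M N → Red s (mk1 (Shape.cabs x) M) (mk1 (Shape.cabs x) N)
  | ibox {s M N} : Red s M N → Red (false :: s) (mk1 Shape.ibox M) (mk1 Shape.ibox N)
  | cbox {s M N} : Red s M N → Red (true :: s) (mk1 Shape.cbox M) (mk1 Shape.cbox N)

def Red' (M N : T) : Prop := ∃ s, Red s M N

/-- Reduction at depth `n`: at a level crossing exactly `n` coinductive boxes. -/
def RedAt (n : ℕ) (M N : T) : Prop := ∃ s, s.count true = n ∧ Red s M N

def Star : T → T → Prop := Relation.ReflTransGen Red'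

/-! ### Environments and well-formation for ℓΛ∞ -/

inductive Pat where
  | lin | ind | coi
deriving DecidableEq

def Env : Type := ℕ → Option Pat

def Env.upd (Γ : Env) (x : ℕ) (p : Option Pat) : Env :=
  fun y => if y = x then p else Γ y

def Env.union (Γ Δ : Env) : Env := fun y => (Γ y).orElse (fun _ => Δ y)

def NoLin (Γ : Env) : Prop := ∀ y, Γ y ≠ some Pat.lin

def OnlyLinAt (Γ : Env) (x : ℕ) : Prop :=
  Γ x = some Pat.lin ∧ ∀ y, y ≠ x → Γ y ≠ some Pat.lin

/-- Splitting of an environment: nonlinear entries are shared, linear ones split. -/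
def Split (Γ Γ₁ Γ₂ : Env) : Prop := ∀ y,
  (Γ₁ y = Γ y ∧ Γ₂ y = Γ y ∧ Γ y ≠ some Pat.lin) ∨
  (Γ y = some Pat.lin ∧
    ((Γ₁ y = some Pat.lin ∧ Γ₂ y = none) ∨ (Γ₂ y = some Pat.lin ∧ Γ₁ y = none)))

/-- The inductive rules of the mixed formal system of ℓΛ∞, with `R` the
judgments provided by the coinductive layer. -/
inductive WFStep (R : Env → T → Prop) : Env → T → Prop
  | base {Γ M} : R Γ M → WFStep R Γ M
  | vl {Γ} (x) : OnlyLinAt Γ x → WFStep R Γ (mk0 (Shape.var x))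
  | vi {Γ} (x) : NoLin Γ → Γ x = some Pat.ind → WFStep R Γ (mk0 (Shape.var x))
  | vc {Γ} (x) : NoLin Γ → Γ x = some Pat.coi → WFStep R Γ (mk0 (Shape.var x))
  | app {Γ Γ₁ Γ₂ M N} : Split Γ Γ₁ Γ₂ → WFStep R Γ₁ M → WFStep R Γ₂ N →
      WFStep R Γ (mk2 M N)
  | ll {Γ x M} : Γ x = none → WFStep R (Γ.upd x (some Pat.lin)) M →
      WFStep R Γ (mk1 (Shape.labs x) M)
  | li {Γ x M} : Γ x = none → WFStep R (Γ.upd x (some Pat.ind)) M →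
      WFStep R Γ (mk1 (Shape.iabs x) M)
  | lc {Γ x M} : Γ x = none → WFStep R (Γ.upd x (some Pat.coi)) M →
      WFStep R Γ (mk1 (Shape.cabs x) M)
  | mi {Γ M} : NoLin Γ → WFStep R Γ M → WFStep R Γ (mk1 Shape.ibox M)

/-- One application of the unique coinductive rule (mc). -/
def CoStep (S : Env → T → Prop) (Γ : Env) (M : T) : Prop :=
  NoLin Γ ∧ ∃ N, M = mk1 Shape.cbox N ∧ S Γ N

/-- Well-formation in ℓΛ∞: greatest fixed point of Ind ∘ Coind, presented via
consistent sets. -/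
def WF (Γ : Env) (M : T) : Prop :=
  ∃ S : Env → T → Prop, (∀ Δ N, S Δ N → WFStep (CoStep S) Δ N) ∧ S Γ M

/-! ### Infinitary reduction ⇒ and its auxiliary relation ⤳ -/

/-- One application of the coinductive ⇒-rule. `true` marks ⇒-judgments,
`false` marks ⤳-judgments. -/
def IRCo (S : Bool → T → T → Prop) (b : Bool) (M L : T) : Prop :=
  b = true ∧ ∃ N, Star M N ∧ S false N L

/-- The inductive ⤳-rules. -/
inductive IRInd (R : Bool → T → T → Prop) : Bool → T → T → Prop
  | base {b M N} : R b M N → IRInd R b M N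
  | varr (x) : IRInd R false (mk0 (Shape.var x)) (mk0 (Shape.var x))
  | app {M N P Q} : IRInd R false M N → IRInd R false P Q →
      IRInd R false (mk2 M P) (mk2 N Q)
  | labs {M N} (x) : IRInd R false M N →
      IRInd R false (mk1 (Shape.labs x) M) (mk1 (Shape.labs x) N)
  | iabs {M N} (x) : IRInd R false M N →
      IRInd R false (mk1 (Shape.iabs x) M) (mk1 (Shape.iabs x) N)
  | cabs {M N} (x) : IRInd R false M N →
      IRInd R false (mk1 (Shape.cabs x) M) (mk1 (Shape.cabs x) N)
  | ibox {M N} : IRInd R false M N →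
      IRInd R false (mk1 Shape.ibox M) (mk1 Shape.ibox N)
  | cbox {M N} : IRInd R true M N →
      IRInd R false (mk1 Shape.cbox M) (mk1 Shape.cbox N)

def IRSys (b : Bool) (M N : T) : Prop :=
  ∃ S : Bool → T → T → Prop,
    (∀ b' M' N', S b' M' N' → IRInd (IRCo S) b' M' N') ∧ S b M N

/-- Infinitary reduction M ⇒ N. -/
def Inf (M N : T) : Prop := IRSys true M N

/-- Auxiliary relation M ⤳ N. -/
def Next (M N : T) : Prop := IRSys false M N

def NormalForm (N : T) : Prop := ∀ s P, ¬ Red s N P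

end LLInf
namespace LLInf

/-! ### The infinitary λ-calculus Λ_{00a} and its Girard-style embedding -/

/-- Inductive rules for membership in Λ_{00a}: when `a = true` the argument
premise goes through the coinductive guard `S`. -/
inductive LamStep (a : Bool) (S : T → Prop) : T → Prop
  | var (x) : LamStep a S (mk0 (Shape.var x))
  | app0 {M N} : a = false → LamStep a S M → LamStep a S N → LamStep a S (mk2 M N)
  | app1 {M N} : a = true → LamStep a S M → S N → LamStep a S (mk2 M N)
  | lam {M} (x) : LamStep a S M → LamStep a S (mk1 (Shape.labs x) M)

/-- `M` is a term of Λ_{00a} (the depth increasing in argument position iff `a`). -/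
def Lam00 (a : Bool) (M : T) : Prop :=
  ∃ S : T → Prop, (∀ N, S N → LamStep a S N) ∧ S M

/-- The Girard-style embedding ⟨·⟩ₐ of Λ_{00a} into ℓΛ∞, positionally:
⟨x⟩ = x, ⟨MN⟩ = ⟨M⟩(◻ₐ⟨N⟩), ⟨λx.M⟩ = λ◻ₐx.⟨M⟩. -/
def embF (a : Bool) : T → List ℕ → Option Shape
  | M, [] =>
      match M [] with
      | some (Shape.var x) => some (Shape.var x)
      | some Shape.app => some Shape.app
      | some (Shape.labs x) => some (if a then Shape.cabs x else Shape.iabs x)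
      | _ => none
  | M, i :: q =>
      match M [] with
      | some Shape.app =>
          if i = 0 then embF a (child M 0) q
          else if i = 1 then
            match q with
            | [] => some (if a then Shape.cbox else Shape.ibox)
            | j :: r => if j = 0 then embF a (child M 1) r else none
          else none
      | some (Shape.labs _) => if i = 0 then embF a (child M 0) q else none
      | _ => none
termination_by M p => p.length
decreasing_by all_goals (simp [List.length_cons]; try omega)

def emb (a : Bool) (M : T) : T := fun p => embF a M p

/-- Reduction at depth `n` in Λ_{00a}: the depth increases only when entering
the second argument of an application, and only when `a = true`. -/
inductive LRed (a : Bool) : ℕ → T → T → Prop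
  | beta (x M N) : LRed a 0 (mk2 (mk1 (Shape.labs x) M) N) (subst x N M)
  | appL {n M N} (P) : LRed a n M N → LRed a n (mk2 M P) (mk2 N P)
  | lam {n M N} (x) : LRed a n M N →
      LRed a n (mk1 (Shape.labs x) M) (mk1 (Shape.labs x) N)
  | appR0 {n M N} (P) : a = false → LRed a n M N → LRed a n (mk2 P M) (mk2 P N)
  | appR1 {n M N} (P) : a = true → LRed a n M N → LRed a (n + 1) (mk2 P M) (mk2 P N)

/-- The environment ◻ₐ(FV(M)): every free variable of `M`, marked inductive
(a = false) or coinductive (a = true). -/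
noncomputable def envOf (a : Bool) (M : T) : Env := fun y =>
  @ite _ (Free y M) (Classical.dec _) (some (if a then Pat.coi else Pat.ind)) none

/-- The defining (guarded) equations of capture-avoiding substitution. -/
def SubstEqs (f : ℕ → T → T → T) : Prop :=
  ∀ x (N : T),
    f x N (mk0 (Shape.var x)) = N ∧
    (∀ y, y ≠ x → f x N (mk0 (Shape.var y)) = mk0 (Shape.var y)) ∧
    (∀ M P, f x N (mk2 M P) = mk2 (f x N M) (f x N P)) ∧
    (∀ y M, y ≠ x → f x N (mk1 (Shape.labs y) M) = mk1 (Shape.labs y) (f x N M)) ∧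
    (∀ M, f x N (mk1 (Shape.labs x) M) = mk1 (Shape.labs x) M) ∧
    (∀ y M, y ≠ x → f x N (mk1 (Shape.iabs y) M) = mk1 (Shape.iabs y) (f x N M)) ∧
    (∀ M, f x N (mk1 (Shape.iabs x) M) = mk1 (Shape.iabs x) M) ∧
    (∀ y M, y ≠ x → f x N (mk1 (Shape.cabs y) M) = mk1 (Shape.cabs y) (f x N M)) ∧
    (∀ M, f x N (mk1 (Shape.cabs x) M) = mk1 (Shape.cabs x) M) ∧
    (∀ M, f x N (mk1 Shape.ibox M) = mk1 Shape.ibox (f x N M)) ∧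
    (∀ M, f x N (mk1 Shape.cbox M) = mk1 Shape.cbox (f x N M))

end LLInf
namespace LLInf

/-! ### The calculus ℓΛ∞^{4S} -/

/-- Patterns of ℓΛ∞^{4S}: x, ↓x, !x, ↑x, #x. -/
inductive Pat4 where
  | lin | dm | im | cm | am
deriving DecidableEq

def Env4 : Type := ℕ → Option Pat4

def Env4.upd (Γ : Env4) (x : ℕ) (p : Option Pat4) : Env4 :=
  fun y => if y = x then p else Γ y

/-- Patterns shared between the premises of applications: ↓, ↑, #. -/
def Shared4 (p : Option Pat4) : Prop :=
  p = some Pat4.dm ∨ p = some Pat4.cm ∨ p = some Pat4.am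

/-- Environment containing only ↓, ↑, # patterns. -/
def Passive4 (Γ : Env4) : Prop := ∀ y, Γ y = none ∨ Shared4 (Γ y)

def Split4 (Γ Γ₁ Γ₂ : Env4) : Prop := ∀ y,
  (Shared4 (Γ y) ∧ Γ₁ y = Γ y ∧ Γ₂ y = Γ y) ∨
  (Γ y = none ∧ Γ₁ y = none ∧ Γ₂ y = none) ∨
  ((Γ y = some Pat4.lin ∨ Γ y = some Pat4.im) ∧
    ((Γ₁ y = Γ y ∧ Γ₂ y = none) ∨ (Γ₂ y = Γ y ∧ Γ₁ y = none)))

/-- Environment transformation of the (mi) rule: conclusion ↓Θ,!Ξ,↑Ψ,#Φ ⊢ !M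
from premise Ξ,↑Ψ,#Φ ⊢ M. -/
def MiEnv (Γ Γ' : Env4) : Prop := ∀ y,
  (Γ y = some Pat4.im ∧ Γ' y = some Pat4.lin) ∨
  (Γ y = some Pat4.cm ∧ Γ' y = some Pat4.cm) ∨
  (Γ y = some Pat4.am ∧ Γ' y = some Pat4.am) ∨
  (Γ y = some Pat4.dm ∧ Γ' y = none) ∨
  (Γ y = none ∧ Γ' y = none)

/-- Environment transformation of the coinductive (mc) rule: conclusion
↓Θ,↑Ξ,#Ψ ⊢ §M from premise #Ξ,#Ψ ⊢ M. -/
def McEnv (Γ Γ' : Env4) : Prop := ∀ y,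
  (Γ y = some Pat4.cm ∧ Γ' y = some Pat4.am) ∨
  (Γ y = some Pat4.am ∧ Γ' y = some Pat4.am) ∨
  (Γ y = some Pat4.dm ∧ Γ' y = none) ∨
  (Γ y = none ∧ Γ' y = none)

/-- The inductive well-formation rules of ℓΛ∞^{4S}. -/
inductive WF4Step (R : Env4 → T → Prop) : Env4 → T → Prop
  | base {Γ M} : R Γ M → WF4Step R Γ M
  | vl {Γ} (x) : Γ x = some Pat4.lin → Passive4 (Γ.upd x none) →
      WF4Step R Γ (mk0 (Shape.var x))
  | vd {Γ} (x) : Γ x = some Pat4.dm → Passive4 Γ → WF4Step R Γ (mk0 (Shape.var x))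
  | va {Γ} (x) : Γ x = some Pat4.am → Passive4 Γ → WF4Step R Γ (mk0 (Shape.var x))
  | app {Γ Γ₁ Γ₂ M N} : Split4 Γ Γ₁ Γ₂ → WF4Step R Γ₁ M → WF4Step R Γ₂ N →
      WF4Step R Γ (mk2 M N)
  | ll {Γ x M} : Γ x = none → WF4Step R (Γ.upd x (some Pat4.lin)) M →
      WF4Step R Γ (mk1 (Shape.labs x) M)
  | li1 {Γ x M} : Γ x = none → WF4Step R (Γ.upd x (some Pat4.dm)) M →
      WF4Step R Γ (mk1 (Shape.iabs x) M)
  | li2 {Γ x M} : Γ x = none → WF4Step R (Γ.upd x (some Pat4.im)) M →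
      WF4Step R Γ (mk1 (Shape.iabs x) M)
  | lc {Γ x M} : Γ x = none → WF4Step R (Γ.upd x (some Pat4.cm)) M →
      WF4Step R Γ (mk1 (Shape.cabs x) M)
  | mi {Γ Γ' M} : MiEnv Γ Γ' → WF4Step R Γ' M → WF4Step R Γ (mk1 Shape.ibox M)

/-- One application of the coinductive rule (mc) of ℓΛ∞^{4S}. -/
def CoStep4 (S : Env4 → T → Prop) (Γ : Env4) (M : T) : Prop :=
  ∃ Γ' N, McEnv Γ Γ' ∧ M = mk1 Shape.cbox N ∧ S Γ' N

/-- Well-formation in ℓΛ∞^{4S}. -/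
def WF4 (Γ : Env4) (M : T) : Prop :=
  ∃ S : Env4 → T → Prop, (∀ Δ N, S Δ N → WF4Step (CoStep4 S) Δ N) ∧ S Γ M

/-! ### Sizes, free occurrences, duplicability factors and weights -/

/-- The defining equations of the size |M|ₘ at depth m, as a relation. -/
inductive SizeRel : T → ℕ → ℕ → Prop
  | var0 (x) : SizeRel (mk0 (Shape.var x)) 0 1
  | ibox0 {M n} : SizeRel M 0 n → SizeRel (mk1 Shape.ibox M) 0 (n + 1)
  | cbox0 (M) : SizeRel (mk1 Shape.cbox M) 0 0
  | app0 {M N n p} : SizeRel M 0 n → SizeRel N 0 p →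
      SizeRel (mk2 M N) 0 (n + p + 1)
  | labs0 {M n} (x) : SizeRel M 0 n → SizeRel (mk1 (Shape.labs x) M) 0 (n + 1)
  | iabs0 {M n} (x) : SizeRel M 0 n → SizeRel (mk1 (Shape.iabs x) M) 0 (n + 1)
  | cabs0 {M n} (x) : SizeRel M 0 n → SizeRel (mk1 (Shape.cabs x) M) 0 (n + 1)
  | varS (x m) : SizeRel (mk0 (Shape.var x)) (m + 1) 0
  | iboxS {M m n} : SizeRel M (m + 1) n → SizeRel (mk1 Shape.ibox M) (m + 1) n
  | cboxS {M m n} : SizeRel M m n → SizeRel (mk1 Shape.cbox M) (m + 1) n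
  | appS {M N m n p} : SizeRel M (m + 1) n → SizeRel N (m + 1) p →
      SizeRel (mk2 M N) (m + 1) (n + p)
  | labsS {M m n} (x) : SizeRel M (m + 1) n → SizeRel (mk1 (Shape.labs x) M) (m + 1) n
  | iabsS {M m n} (x) : SizeRel M (m + 1) n → SizeRel (mk1 (Shape.iabs x) M) (m + 1) n
  | cabsS {M m n} (x) : SizeRel M (m + 1) n → SizeRel (mk1 (Shape.cabs x) M) (m + 1) n

/-- Number of free occurrences of `x`, as a relation. -/
inductive NFO (x : ℕ) : T → ℕ → Prop
  | varEq : NFO x (mk0 (Shape.var x)) 1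
  | varNe {y} : y ≠ x → NFO x (mk0 (Shape.var y)) 0
  | app {M N n p} : NFO x M n → NFO x N p → NFO x (mk2 M N) (n + p)
  | labsSh (M) : NFO x (mk1 (Shape.labs x) M) 0
  | labs {y M n} : y ≠ x → NFO x M n → NFO x (mk1 (Shape.labs y) M) n
  | iabsSh (M) : NFO x (mk1 (Shape.iabs x) M) 0
  | iabs {y M n} : y ≠ x → NFO x M n → NFO x (mk1 (Shape.iabs y) M) n
  | cabsSh (M) : NFO x (mk1 (Shape.cabs x) M) 0
  | cabs {y M n} : y ≠ x → NFO x M n → NFO x (mk1 (Shape.cabs y) M) n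
  | ibox {M n} : NFO x M n → NFO x (mk1 Shape.ibox M) n
  | cbox {M n} : NFO x M n → NFO x (mk1 Shape.cbox M) n
  | cboxNot {M} : ¬ Free x M → NFO x (mk1 Shape.cbox M) 0

/-- The defining equations of the duplicability factor Dₘ(M), as a relation. -/
inductive DRel : T → ℕ → ℕ → Prop
  | var0 (x) : DRel (mk0 (Shape.var x)) 0 1
  | ibox0 {M d} : DRel M 0 d → DRel (mk1 Shape.ibox M) 0 d
  | cbox0 (M) : DRel (mk1 Shape.cbox M) 0 1
  | app0 {M N d e} : DRel M 0 d → DRel N 0 e → DRel (mk2 M N) 0 (max d e)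
  | labs0 {M d} (x) : DRel M 0 d → DRel (mk1 (Shape.labs x) M) 0 d
  | cabs0 {M d} (x) : DRel M 0 d → DRel (mk1 (Shape.cabs x) M) 0 d
  | iabs0 {x M k d} : NFO x M k → DRel M 0 d →
      DRel (mk1 (Shape.iabs x) M) 0 (max k d)
  | varS (x m) : DRel (mk0 (Shape.var x)) (m + 1) 1
  | iboxS {M m d} : DRel M (m + 1) d → DRel (mk1 Shape.ibox M) (m + 1) d
  | cboxS {M m d} : DRel M m d → DRel (mk1 Shape.cbox M) (m + 1) d
  | appS {M N m d e} : DRel M (m + 1) d → DRel N (m + 1) e →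
      DRel (mk2 M N) (m + 1) (max d e)
  | labsS {M m d} (x) : DRel M (m + 1) d → DRel (mk1 (Shape.labs x) M) (m + 1) d
  | iabsS {M m d} (x) : DRel M (m + 1) d → DRel (mk1 (Shape.iabs x) M) (m + 1) d
  | cabsS {M m d} (x) : DRel M (m + 1) d → DRel (mk1 (Shape.cabs x) M) (m + 1) d

/-- The defining equations of the n-weight wⁿₘ(M), as a relation. -/
inductive WRel (n : ℕ) : T → ℕ → ℕ → Prop
  | var0 (x) : WRel n (mk0 (Shape.var x)) 0 1
  | ibox0 {M w} : WRel n M 0 w → WRel n (mk1 Shape.ibox M) 0 (n * w)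
  | cbox0 (M) : WRel n (mk1 Shape.cbox M) 0 0
  | app0 {M N w v} : WRel n M 0 w → WRel n N 0 v → WRel n (mk2 M N) 0 (w + v)
  | labs0 {M w} (x) : WRel n M 0 w → WRel n (mk1 (Shape.labs x) M) 0 (w + 1)
  | iabs0 {M w} (x) : WRel n M 0 w → WRel n (mk1 (Shape.iabs x) M) 0 (w + 1)
  | cabs0 {M w} (x) : WRel n M 0 w → WRel n (mk1 (Shape.cabs x) M) 0 (w + 1)
  | varS (x m) : WRel n (mk0 (Shape.var x)) (m + 1) 0
  | iboxS {M m w} : WRel n M (m + 1) w → WRel n (mk1 Shape.ibox M) (m + 1) w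
  | cboxS {M m w} : WRel n M m w → WRel n (mk1 Shape.cbox M) (m + 1) w
  | appS {M N m w v} : WRel n M (m + 1) w → WRel n N (m + 1) v →
      WRel n (mk2 M N) (m + 1) (w + v)
  | labsS {M m w} (x) : WRel n M (m + 1) w → WRel n (mk1 (Shape.labs x) M) (m + 1) w
  | iabsS {M m w} (x) : WRel n M (m + 1) w → WRel n (mk1 (Shape.iabs x) M) (m + 1) w
  | cabsS {M m w} (x) : WRel n M (m + 1) w → WRel n (mk1 (Shape.cabs x) M) (m + 1) w

/-- Wₘ(M) = w^{Dₘ(M)}ₘ(M): the weight of `M` at depth `m`. -/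
def TW (M : T) (m w : ℕ) : Prop := ∃ d, DRel M m d ∧ WRel d M m w

end LLInf

namespace LLInf

/-!
The defining equations of `|M|ₘ` are syntax-directed, so a size derivation is unique. Existence
goes by induction on `m` and, at fixed `m`, on the inductive layer of the well-formation
derivation: at a coinductive box `§N` the equation `|§N|₀ = 0` needs nothing about `N`, and
`|§N|ₘ₊₁ = |N|ₘ` holds by the outer induction hypothesis, since `N` is again well formed.
-/

@[simp] lemma mk0_nil (s : Shape) : mk0 s [] = some s := rfl

@[simp] lemma mk1_nil (s : Shape) (M : T) : mk1 s M [] = some s := rfl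

@[simp] lemma mk2_nil (M N : T) : mk2 M N [] = some Shape.app := rfl

lemma mk1_inj {s s' : Shape} {M N : T} : mk1 s M = mk1 s' N ↔ s = s' ∧ M = N :=
  ⟨fun h => ⟨by simpa using congrFun h [], funext fun p => congrFun h (0 :: p)⟩,
    by rintro ⟨rfl, rfl⟩; rfl⟩

lemma mk2_inj {M N M' N' : T} : mk2 M N = mk2 M' N' ↔ M = M' ∧ N = N' :=
  ⟨fun h => ⟨funext fun p => congrFun h (0 :: p), funext fun p => congrFun h (1 :: p)⟩,
    by rintro ⟨rfl, rfl⟩; rfl⟩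

theorem SizeRel.unique {M : T} {m n n' : ℕ} (h₁ : SizeRel M m n) (h₂ : SizeRel M m n') :
    n = n' := by
  generalize hP : M = P at h₂
  -- comparing root labels rules out every rule for `h₂` but the one matching `h₁`
  induction h₁ generalizing n' P <;> cases h₂ <;>
    (have hroot := congrFun hP []; simp at hroot) <;> grind [mk1_inj, mk2_inj]

theorem WF4Step.exists_sizeRel {R : Env4 → T → Prop} {m : ℕ}
    (hR : ∀ Γ M, R Γ M → ∃ n, SizeRel M m n) {Γ : Env4} {M : T} (h : WF4Step R Γ M) :
    ∃ n, SizeRel M m n := by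
  induction h with
  | base h => exact hR _ _ h
  | vl x | vd x | va x => cases m; exacts [⟨1, .var0 x⟩, ⟨0, .varS x _⟩]
  | app _ _ _ ihM ihN =>
    obtain ⟨n, hn⟩ := ihM
    obtain ⟨p, hp⟩ := ihN
    cases m; exacts [⟨_, .app0 hn hp⟩, ⟨_, .appS hn hp⟩]
  | ll _ _ ih =>
    obtain ⟨n, hn⟩ := ih
    cases m; exacts [⟨_, .labs0 _ hn⟩, ⟨_, .labsS _ hn⟩]
  | li1 _ _ ih | li2 _ _ ih =>
    obtain ⟨n, hn⟩ := ih
    cases m; exacts [⟨_, .iabs0 _ hn⟩, ⟨_, .iabsS _ hn⟩]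
  | lc _ _ ih =>
    obtain ⟨n, hn⟩ := ih
    cases m; exacts [⟨_, .cabs0 _ hn⟩, ⟨_, .cabsS _ hn⟩]
  | mi _ _ ih =>
    obtain ⟨n, hn⟩ := ih
    cases m; exacts [⟨_, .ibox0 hn⟩, ⟨_, .iboxS hn⟩]

theorem WF4.exists_sizeRel : ∀ (m : ℕ) {Γ : Env4} {M : T}, WF4 Γ M → ∃ n, SizeRel M m n
  | m, Γ, M, ⟨S, hS, hM⟩ => (hS Γ M hM).exists_sizeRel fun _ _ ⟨_, N, _, hN, hSN⟩ => by
    subst hN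
    cases m with
    | zero => exact ⟨0, .cbox0 N⟩
    | succ m =>
      obtain ⟨n, hn⟩ := WF4.exists_sizeRel m ⟨S, hS, hSN⟩
      exact ⟨n, .cboxS hn⟩

/-- For every term of ℓΛ∞^{4S} and every depth `m`, there is a unique natural
number satisfying the defining equations of the size at depth `m`. -/
theorem size_well_defined (Γ : Env4) (M : T) (h : WF4 Γ M) (m : ℕ) :
    ∃! n : ℕ, SizeRel M m n := by
  obtain ⟨n, hn⟩ := h.exists_sizeRel m
  exact ⟨n, hn, fun n' hn' => hn'.unique hn⟩

end LLInf
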